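/- arXiv:2601.23155 — 7 statements merged into one kernel-verified Lean document; each statement's English description precedes it below -/
import Mathlib

section
/- Let f : 2^D → ℝ be a normalized, monotone, submodular set function on a finite ground set D, and let k ≥ 1. Let S_greedy = S_k be the output of the greedy algorithm with budget k, and let S* be any subset of D with |S*| ≤ k maximizing f. Then f(S_greedy) ≥ (1 − 1/e) · f(S*). -/
/-!
Let `O` be a set with `|O| ≤ k`. By submodularity, the gain of adding all of `O` to the
current greedy set `Sₜ` is at most the sum of the single-element gains, each of which is at most
the greedy gain; hence `f O - f Sₜ ≤ k (f Sₜ₊₁ - f Sₜ)`. The gap `f O - f Sₜ` therefore shrinks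
by a factor `1 - 1/k` at every step, and `(1 - 1/k)ᵏ ≤ 1/e`.
-/

open Finset

section Submodular

variable {ι : Type*} [DecidableEq ι] {f : Finset ι → ℝ}

lemma marginal_nonneg (hmono : ∀ A B : Finset ι, A ⊆ B → f A ≤ f B) (A : Finset ι) (x : ι) :
    0 ≤ f (insert x A) - f A :=
  sub_nonneg.2 (hmono _ _ (subset_insert x A))

lemma marginal_le_marginal_of_subset (hmono : ∀ A B : Finset ι, A ⊆ B → f A ≤ f B)
    (hsub : ∀ A B : Finset ι, A ⊆ B → ∀ x ∉ B, f (insert x B) - f B ≤ f (insert x A) - f A)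
    {A B : Finset ι} (hAB : A ⊆ B) (x : ι) :
    f (insert x B) - f B ≤ f (insert x A) - f A := by
  by_cases hxB : x ∈ B
  · rw [insert_eq_of_mem hxB, sub_self]
    exact marginal_nonneg hmono A x
  · exact hsub A B hAB x hxB

lemma sub_le_sum_marginal (hmono : ∀ A B : Finset ι, A ⊆ B → f A ≤ f B)
    (hsub : ∀ A B : Finset ι, A ⊆ B → ∀ x ∉ B, f (insert x B) - f B ≤ f (insert x A) - f A)
    (A B : Finset ι) :
    f (A ∪ B) - f A ≤ ∑ y ∈ B, (f (insert y A) - f A) := by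
  induction B using Finset.induction_on with
  | empty => simp
  | insert x B hx ih =>
    rw [union_insert, sum_insert hx]
    have := marginal_le_marginal_of_subset hmono hsub (subset_union_left : A ⊆ A ∪ B) x
    linarith

lemma sub_le_mul_greedy_marginal (hmono : ∀ A B : Finset ι, A ⊆ B → f A ≤ f B)
    (hsub : ∀ A B : Finset ι, A ⊆ B → ∀ x ∉ B, f (insert x B) - f B ≤ f (insert x A) - f A)
    {A O : Finset ι} {k : ℕ} (hO : O.card ≤ k) {x : ι}
    (hx : ∀ y ∉ A, f (insert y A) - f A ≤ f (insert x A) - f A) :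
    f O - f A ≤ k * (f (insert x A) - f A) := by
  have hgain : ∀ y, f (insert y A) - f A ≤ f (insert x A) - f A := by
    intro y
    by_cases hy : y ∈ A
    · rw [insert_eq_of_mem hy, sub_self]
      exact marginal_nonneg hmono A x
    · exact hx y hy
  have := marginal_nonneg hmono A x
  calc f O - f A ≤ f (A ∪ O) - f A := by gcongr; exact hmono _ _ subset_union_right
    _ ≤ ∑ y ∈ O, (f (insert y A) - f A) := sub_le_sum_marginal hmono hsub A O
    _ ≤ ∑ _y ∈ O, (f (insert x A) - f A) := sum_le_sum fun y _ ↦ hgain y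
    _ = O.card * (f (insert x A) - f A) := by rw [sum_const, nsmul_eq_mul]
    _ ≤ k * (f (insert x A) - f A) := by gcongr

end Submodular

theorem greedy_classical_guarantee_general
    {ι : Type*} [DecidableEq ι]
    (f : Finset ι → ℝ)
    (hnorm : f ∅ = 0)
    (hmono : ∀ A B : Finset ι, A ⊆ B → f A ≤ f B)
    (hsub : ∀ A B : Finset ι, A ⊆ B → ∀ x ∉ B,
      f (insert x B) - f B ≤ f (insert x A) - f A)
    (k : ℕ) (hk : 1 ≤ k)
    (S : ℕ → Finset ι) (hS0 : S 0 = ∅)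
    (hgreedy : ∀ t < k, ∃ x ∉ S t, S (t + 1) = insert x (S t) ∧
      ∀ y ∉ S t, f (insert y (S t)) - f (S t) ≤ f (insert x (S t)) - f (S t))
    (Sstar : Finset ι) (hcard : Sstar.card ≤ k) :
    f (S k) ≥ (1 - 1 / Real.exp 1) * f Sstar := by
  have hkpos : (0 : ℝ) < k := by exact_mod_cast hk
  have hgap : ∀ t < k, f Sstar - f (S (t + 1)) ≤ (1 - 1 / k) * (f Sstar - f (S t)) := by
    intro t ht
    obtain ⟨x, -, hstep, hmax⟩ := hgreedy t ht
    have := sub_le_mul_greedy_marginal hmono hsub hcard hmax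
    rw [hstep]
    field_simp
    linarith
  have hratio : (0 : ℝ) ≤ 1 - 1 / k :=
    sub_nonneg.2 ((div_le_one hkpos).2 (by exact_mod_cast hk))
  have hdecay : (1 - 1 / (k : ℝ)) ^ k ≤ 1 / Real.exp 1 := by
    simpa [Real.exp_neg] using
      Real.one_sub_div_pow_le_exp_neg (n := k) (t := 1) (by exact_mod_cast hk)
  have hopt_nonneg : 0 ≤ f Sstar := hnorm ▸ hmono _ _ (empty_subset Sstar)
  have hfinal_gap := le_geom (u := fun t ↦ f Sstar - f (S t)) hratio k hgap
  simp only [hS0, hnorm, sub_zero] at hfinal_gap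
  nlinarith [mul_le_mul_of_nonneg_right hdecay hopt_nonneg]

/-- Classical `(1 − 1/e)` greedy guarantee: for a normalized,
monotone, submodular set function on a finite ground set, greedy selection with
budget `k ≥ 1` achieves `f(S_greedy) ≥ (1 − 1/e) · f(S*)` where `S*` is any
optimal subset of cardinality at most `k`. -/
theorem greedy_classical_guarantee
    {ι : Type*} [Fintype ι] [DecidableEq ι]
    (f : Finset ι → ℝ)
    (hnorm : f ∅ = 0)
    (hmono : ∀ A B : Finset ι, A ⊆ B → f A ≤ f B)
    (hsub : ∀ A B : Finset ι, A ⊆ B → ∀ x ∉ B,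
      f (insert x B) - f B ≤ f (insert x A) - f A)
    (k : ℕ) (hk : 1 ≤ k)
    (S : ℕ → Finset ι) (hS0 : S 0 = ∅)
    (hgreedy : ∀ t < k, ∃ x ∉ S t, S (t + 1) = insert x (S t) ∧
      ∀ y ∉ S t, f (insert y (S t)) - f (S t) ≤ f (insert x (S t)) - f (S t))
    (Sstar : Finset ι) (hcard : Sstar.card ≤ k)
    (hopt : ∀ T : Finset ι, T.card ≤ k → f T ≤ f Sstar) :
    f (S k) ≥ (1 - 1 / Real.exp 1) * f Sstar :=
  greedy_classical_guarantee_general f hnorm hmono hsub k hk S hS0 hgreedy Sstar hcard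
end

section
/- Let f : 2^D → ℝ be a monotone submodular set function on a finite ground set D, let S* ⊆ D with |S*| ≤ k and let S ⊆ D with f(S*) > f(S) and S* ⊄ S. Then there exists y ∈ S*∖S with marginal gain Δ_y(S) = f(S ∪ {y}) − f(S) ≥ (f(S*) − f(S))/k; in particular max_{y ∈ S*∖S} Δ_y(S) ≥ (f(S*) − f(S))/k. -/
open Finset

lemma union_diff_sum {ι : Type*} [DecidableEq ι]
    (f : Finset ι → ℝ)
    (hsub : ∀ A B : Finset ι, A ⊆ B → ∀ x ∉ B,
      f (insert x B) - f B ≤ f (insert x A) - f A)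
    (S : Finset ι) :
    ∀ T : Finset ι, f (S ∪ T) - f S ≤ ∑ y ∈ T \ S, (f (insert y S) - f S) := by
  intro T
  induction T using Finset.induction_on with
  | empty => simp
  | @insert x T hx ih =>
    by_cases hxS : x ∈ S
    · have h1 : S ∪ insert x T = S ∪ T := by
        rw [Finset.union_insert, Finset.insert_eq_self.2 (Finset.mem_union_left _ hxS)]
      have h2 : insert x T \ S = T \ S := by
        rw [Finset.insert_sdiff_of_mem _ hxS]
      rw [h1, h2]; exact ih
    · have h1 : S ∪ insert x T = insert x (S ∪ T) := by
        rw [Finset.union_insert]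
      have hxST : x ∉ S ∪ T := by simp [hxS, hx]
      have h3 : f (insert x (S ∪ T)) - f (S ∪ T) ≤ f (insert x S) - f S :=
        hsub S (S ∪ T) Finset.subset_union_left x hxST
      have h2 : insert x T \ S = insert x (T \ S) := by
        rw [Finset.insert_sdiff_of_notMem _ hxS]
      rw [h1, h2, Finset.sum_insert (by simp [hx])]
      linarith

/-- For a monotone submodular `f`, if `|S*| ≤ k`, `f(S*) > f(S)`
and `S* ⊄ S`, then some `y ∈ S*∖S` has marginal gain at least `(f(S*) − f(S))/k`;
in particular the maximal marginal gain over `S*∖S` is at least that large. -/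
theorem exists_large_marginal_gain
    {ι : Type*} [Fintype ι] [DecidableEq ι]
    (f : Finset ι → ℝ)
    (hmono : ∀ A B : Finset ι, A ⊆ B → f A ≤ f B)
    (hsub : ∀ A B : Finset ι, A ⊆ B → ∀ x ∉ B,
      f (insert x B) - f B ≤ f (insert x A) - f A)
    (k : ℕ) (Sstar S : Finset ι)
    (hcard : Sstar.card ≤ k)
    (hgt : f S < f Sstar)
    (hnsub : ¬ Sstar ⊆ S) :
    ∃ y ∈ Sstar \ S, (f Sstar - f S) / k ≤ f (insert y S) - f S := by
  have hne : (Sstar \ S).Nonempty := by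
    rw [Finset.sdiff_nonempty]; exact hnsub
  have hstar : f Sstar ≤ f (S ∪ Sstar) := hmono _ _ Finset.subset_union_right
  have hsum : f Sstar - f S ≤ ∑ y ∈ Sstar \ S, (f (insert y S) - f S) := by
    have := union_diff_sum f hsub S Sstar
    linarith
  have hk : 0 < (k : ℝ) := by
    have : 0 < k := lt_of_lt_of_le (Finset.card_pos.2 (hne.mono (Finset.sdiff_subset))) hcard
    exact_mod_cast this
  have hn : ((Sstar \ S).card : ℝ) ≤ (k : ℝ) := by
    exact_mod_cast le_trans (Finset.card_le_card Finset.sdiff_subset) hcard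
  have hconst : ∑ _y ∈ Sstar \ S, ((f Sstar - f S) / k)
      ≤ ∑ y ∈ Sstar \ S, (f (insert y S) - f S) := by
    rw [Finset.sum_const, nsmul_eq_mul]
    have h1 : ((Sstar \ S).card : ℝ) * ((f Sstar - f S) / k) ≤ f Sstar - f S := by
      calc ((Sstar \ S).card : ℝ) * ((f Sstar - f S) / k)
          ≤ (k : ℝ) * ((f Sstar - f S) / k) := by
            apply mul_le_mul_of_nonneg_right hn
            exact div_nonneg (by linarith) hk.le
        _ = f Sstar - f S := by field_simp
    linarith
  obtain ⟨y, hy, hy2⟩ := Finset.exists_le_of_sum_le hne hconst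
  exact ⟨y, hy, hy2⟩
end

section
/- Let f : 2^D → ℝ be a normalized, monotone, submodular set function on a finite ground set D, let k ≥ 1, let S_0 = ∅, S_1, …, S_k be the greedy chain with budget k, and let S* be any subset with |S*| ≤ k maximizing f. Then the residuals R_t = f(S*) − f(S_t) satisfy R_{t+1} ≤ (1 − 1/k) R_t for each t, and hence f(S_k) ≥ (1 − (1 − 1/k)^k) · f(S*). -/
/-!
Submodularity bounds the gain `f S* - f Sₜ` by the sum of the single-element gains over `S*`,
hence by `k` times the largest one, which is the greedy gain `f Sₜ₊₁ - f Sₜ`. So each greedy step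
removes at least a `1/k` fraction of the residual, and iterating the contraction `k` times from
`R₀ = f S*` gives the approximation bound.
-/

open Finset

section Submodular

variable {ι : Type*} [DecidableEq ι] {f : Finset ι → ℝ}

theorem sub_le_sum_marginal_of_submodular
    (hsub : ∀ A B : Finset ι, A ⊆ B → ∀ x ∉ B,
      f (insert x B) - f B ≤ f (insert x A) - f A)
    (A T : Finset ι) :
    f (A ∪ T) - f A ≤ ∑ x ∈ T, (f (insert x A) - f A) := by
  induction T using Finset.induction_on with
  | empty => simp
  | insert x T hxT ih =>
    rw [sum_insert hxT, union_insert]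
    by_cases hxA : x ∈ A
    · rw [insert_eq_of_mem (mem_union_left T hxA), insert_eq_of_mem hxA]
      linarith
    · have := hsub A (A ∪ T) subset_union_left x (by simp [hxA, hxT])
      linarith

theorem sub_le_mul_max_marginal
    (hmono : ∀ A B : Finset ι, A ⊆ B → f A ≤ f B)
    (hsub : ∀ A B : Finset ι, A ⊆ B → ∀ x ∉ B,
      f (insert x B) - f B ≤ f (insert x A) - f A)
    {k : ℕ} {A T : Finset ι} (hT : #T ≤ k) {x : ι}
    (hmax : ∀ y ∉ A, f (insert y A) - f A ≤ f (insert x A) - f A) :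
    f T - f A ≤ k * (f (insert x A) - f A) := by
  have hgain : 0 ≤ f (insert x A) - f A := sub_nonneg.2 (hmono _ _ (subset_insert x A))
  calc f T - f A ≤ f (A ∪ T) - f A := by gcongr; exact hmono _ _ subset_union_right
    _ ≤ ∑ y ∈ T, (f (insert y A) - f A) := sub_le_sum_marginal_of_submodular hsub A T
    _ ≤ ∑ _y ∈ T, (f (insert x A) - f A) := by
        refine sum_le_sum fun y _ => ?_
        by_cases hyA : y ∈ A
        · rwa [insert_eq_of_mem hyA, sub_self]
        · exact hmax y hyA
    _ = #T * (f (insert x A) - f A) := by rw [sum_const, nsmul_eq_mul]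
    _ ≤ k * (f (insert x A) - f A) := by gcongr

end Submodular

theorem sub_le_one_sub_one_div_mul {R δ : ℝ} {k : ℕ} (hk : 0 < k) (h : R ≤ k * δ) :
    R - δ ≤ (1 - 1 / (k : ℝ)) * R := by
  have hRk : R / k ≤ δ := (div_le_iff₀' (by exact_mod_cast hk)).2 h
  calc R - δ ≤ R - R / k := by linarith
    _ = (1 - 1 / (k : ℝ)) * R := by ring

theorem greedy_residual_step {ι : Type*} [DecidableEq ι] {f : Finset ι → ℝ}
    (hmono : ∀ A B : Finset ι, A ⊆ B → f A ≤ f B)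
    (hsub : ∀ A B : Finset ι, A ⊆ B → ∀ x ∉ B,
      f (insert x B) - f B ≤ f (insert x A) - f A)
    {k : ℕ} (hk : 0 < k) {A T : Finset ι} (hT : #T ≤ k) {x : ι}
    (hmax : ∀ y ∉ A, f (insert y A) - f A ≤ f (insert x A) - f A) :
    f T - f (insert x A) ≤ (1 - 1 / (k : ℝ)) * (f T - f A) := by
  convert sub_le_one_sub_one_div_mul hk (sub_le_mul_max_marginal hmono hsub hT hmax) using 1
  ring

theorem greedy_residual_recursion_general
    {ι : Type*} [DecidableEq ι]
    (f : Finset ι → ℝ)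
    (hnorm : f ∅ = 0)
    (hmono : ∀ A B : Finset ι, A ⊆ B → f A ≤ f B)
    (hsub : ∀ A B : Finset ι, A ⊆ B → ∀ x ∉ B,
      f (insert x B) - f B ≤ f (insert x A) - f A)
    (k : ℕ)
    (S : ℕ → Finset ι) (hS0 : S 0 = ∅)
    (hgreedy : ∀ t < k, ∃ x ∉ S t, S (t + 1) = insert x (S t) ∧
      ∀ y ∉ S t, f (insert y (S t)) - f (S t) ≤ f (insert x (S t)) - f (S t))
    (Sstar : Finset ι) (hcard : Sstar.card ≤ k) :
    (∀ t < k, f Sstar - f (S (t + 1)) ≤ (1 - 1 / (k : ℝ)) * (f Sstar - f (S t))) ∧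
    f (S k) ≥ (1 - (1 - 1 / (k : ℝ)) ^ k) * f Sstar := by
  have hstep : ∀ t < k, f Sstar - f (S (t + 1)) ≤ (1 - 1 / (k : ℝ)) * (f Sstar - f (S t)) := by
    intro t ht
    obtain ⟨x, -, hSucc, hmax⟩ := hgreedy t ht
    rw [hSucc]
    exact greedy_residual_step hmono hsub (by omega) hcard hmax
  refine ⟨hstep, ?_⟩
  have hq : (0 : ℝ) ≤ 1 - 1 / k := sub_nonneg.2 (by simpa using Nat.cast_inv_le_one k)
  have hgeom := le_geom (u := fun t => f Sstar - f (S t)) hq k hstep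
  simp only [hS0, hnorm, sub_zero] at hgeom
  linarith

/-- Residual recursion for greedy selection: with residuals
`R_t = f(S*) − f(S_t)` along the greedy chain, `R_{t+1} ≤ (1 − 1/k) R_t` for each
`t < k`, and hence `f(S_k) ≥ (1 − (1 − 1/k)^k) · f(S*)`. -/
theorem greedy_residual_recursion
    {ι : Type*} [Fintype ι] [DecidableEq ι]
    (f : Finset ι → ℝ)
    (hnorm : f ∅ = 0)
    (hmono : ∀ A B : Finset ι, A ⊆ B → f A ≤ f B)
    (hsub : ∀ A B : Finset ι, A ⊆ B → ∀ x ∉ B,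
      f (insert x B) - f B ≤ f (insert x A) - f A)
    (k : ℕ) (hk : 1 ≤ k)
    (S : ℕ → Finset ι) (hS0 : S 0 = ∅)
    (hgreedy : ∀ t < k, ∃ x ∉ S t, S (t + 1) = insert x (S t) ∧
      ∀ y ∉ S t, f (insert y (S t)) - f (S t) ≤ f (insert x (S t)) - f (S t))
    (Sstar : Finset ι) (hcard : Sstar.card ≤ k)
    (hopt : ∀ T : Finset ι, T.card ≤ k → f T ≤ f Sstar) :
    (∀ t < k, f Sstar - f (S (t + 1)) ≤ (1 - 1 / (k : ℝ)) * (f Sstar - f (S t))) ∧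
    f (S k) ≥ (1 - (1 - 1 / (k : ℝ)) ^ k) * f Sstar :=
  greedy_residual_recursion_general f hnorm hmono hsub k S hS0 hgreedy Sstar hcard
end

section
/- Let f : 2^D → ℝ be a normalized, monotone, submodular set function on a finite ground set D with Δ_x(∅) > 0 for all x ∈ D, and with total curvature c = 1 − min_{x∈D} Δ_x(D∖{x})/Δ_x(∅) satisfying 0 < c ≤ 1. Let S_greedy be the output of the greedy algorithm with budget k and S* any subset with |S*| ≤ k maximizing f. Then f(S_greedy) ≥ ((1 − e^{−c})/c) · f(S*). In particular, as c → 0 the approximation factor approaches 1, and at c = 1 it equals 1 − 1/e. -/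
open Finset Filter Topology

/-!
Write `g_t` for the gain of the `t`-th greedy step, `O = Sstar`, and
`D_t = f O - f S_t + (1 - c) ∑_{s ∈ S_t \ O} f {s}`. Submodularity bounds `f (O ∪ S_t)` above
by `f S_t + |O \ S_t| g_t`, curvature bounds it below by `f O + (1 - c) ∑_{s ∈ S_t \ O} f {s}`,
so `D_t ≤ K_t g_t` with `K_t = k - |O ∩ S_t|`. A greedy step inside `O` lowers `D` by `g_t` and
`K` by one; a step outside `O` lowers `D` by at most `c g_t` and keeps `K`. Induction on the
number of remaining steps then gives `(1 - (1 - c / K_t)^(k - t)) D_t ≤ c (f S_k - f S_t)`;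
at `t = 0` this is `(1 - (1 - c / k)^k) f O ≤ c f S_k`, and `(1 - c / k)^k ≤ e^{-c}`.
-/

section
variable {c : ℝ}

lemma pow_succ_le_pow_sub_one_div (hc0 : 0 ≤ c) (hc1 : c ≤ 1) {K : ℝ} {n : ℕ}
    (hn : (n : ℝ) + 2 ≤ K) : (1 - c / K) ^ (n + 1) ≤ (1 - c / (K - 1)) ^ n := by
  have hK : 0 < K - 1 := by linarith [n.cast_nonneg (α := ℝ)]
  have hK' : 0 < K := by linarith
  set a := 1 - c / K with ha_def
  set b := 1 - c / (K - 1) with hb_def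
  have ha : 0 < a := by rw [sub_pos, div_lt_one hK']; linarith
  have hb : 0 ≤ b := by rw [sub_nonneg, div_le_one hK]; linarith
  have hgap : n * (a - b) ≤ a * (1 - a) := by
    rw [ha_def, hb_def, ← sub_nonneg]
    have : n * K ≤ (K - c) * (K - 1) := by nlinarith
    have e : (1 - c / K) * (1 - (1 - c / K)) - n * (1 - c / K - (1 - c / (K - 1)))
        = c * ((K - c) * (K - 1) - n * K) / (K * K * (K - 1)) := by
      field_simp; ring
    rw [e]
    apply div_nonneg (mul_nonneg hc0 (by linarith)) (by positivity)
  have key : a ≤ (b / a) ^ n := by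
    calc a ≤ 1 - n * (a - b) / a := by rw [le_sub_comm, div_le_iff₀ ha]; linarith
      _ = 1 + n * (b / a - 1) := by field_simp; ring
      _ ≤ (1 + (b / a - 1)) ^ n := one_add_mul_le_pow (by linarith [div_nonneg hb ha.le]) n
      _ = (b / a) ^ n := by ring
  calc a ^ (n + 1) = a * a ^ n := by ring
    _ ≤ (b / a) ^ n * a ^ n := by gcongr
    _ = b ^ n := by rw [div_pow, div_mul_cancel₀ _ (pow_pos ha n).ne']

lemma one_sub_pow_succ_le (hc0 : 0 ≤ c) (hc1 : c ≤ 1) {K : ℝ} {n : ℕ}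
    (hn : (n : ℝ) + 1 ≤ K) :
    1 - (1 - c / K) ^ (n + 1) ≤ (1 - 1 / K) * (1 - (1 - c / (K - 1)) ^ n) + c / K := by
  induction n with
  | zero => simp
  | succ n ih =>
    push_cast at hn
    have hK : 1 < K := by linarith [n.cast_nonneg (α := ℝ)]
    have hweight : (1 - 1 / K) * (c / (K - 1)) = c / K := by
      field_simp [(by linarith : K - 1 ≠ 0), (by linarith : K ≠ 0)]
    have hterm := mul_le_mul_of_nonneg_left
      (pow_succ_le_pow_sub_one_div hc0 hc1 (K := K) (n := n) (by linarith))
      (div_nonneg hc0 (by linarith) : 0 ≤ c / K)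
    linear_combination ih (by linarith) + hterm - (1 - c / (K - 1)) ^ n * hweight

lemma one_sub_div_pow_mem_Icc (hc0 : 0 ≤ c) (hc1 : c ≤ 1) {L : ℝ} {n : ℕ}
    (hn : (n : ℝ) ≤ L) :
    (1 - c / L) ^ n ∈ Set.Icc (1 - c) 1 := by
  rcases n.eq_zero_or_pos with rfl | hpos
  · simpa using hc0
  have hL : 1 ≤ L := le_trans (by exact_mod_cast hpos) hn
  have hx : c / L ≤ 1 := (div_le_one (by linarith)).mpr (by linarith)
  have hx0 : 0 ≤ c / L := div_nonneg hc0 (by linarith)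
  refine ⟨?_, pow_le_one₀ (by linarith) (by linarith)⟩
  calc 1 - c ≤ 1 + n * -(c / L) := by
        rw [mul_neg, ← mul_div_assoc, mul_comm, mul_div_assoc]
        nlinarith [(div_le_one (by linarith : (0:ℝ) < L)).mpr hn]
    _ ≤ (1 - c / L) ^ n := by
        rw [sub_eq_add_neg]; exact one_add_mul_le_pow (by linarith) n

lemma one_sub_pow_succ_mul_le_add_of_sub_one (hc0 : 0 ≤ c) (hc1 : c ≤ 1) {K D D' g s : ℝ}
    {n : ℕ} (hn : (n : ℝ) + 1 ≤ K) (hg : 0 ≤ g) (hs : 0 ≤ s) (hD : D ≤ K * g)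
    (hD' : D - g ≤ D') (ih : (1 - (1 - c / (K - 1)) ^ n) * D' ≤ c * s) :
    (1 - (1 - c / K) ^ (n + 1)) * D ≤ c * (s + g) := by
  obtain ⟨hlo, hhi⟩ := one_sub_div_pow_mem_Icc hc0 hc1 (L := K - 1) (n := n) (by linarith)
  set φ := 1 - (1 - c / (K - 1)) ^ n
  have hgD : D / K ≤ g := (div_le_iff₀' (by linarith [n.cast_nonneg (α := ℝ)])).mpr hD
  by_cases hD0 : D ≤ 0
  · have hφ : 0 ≤ 1 - (1 - c / K) ^ (n + 1) :=
      sub_nonneg.mpr (one_sub_div_pow_mem_Icc hc0 hc1 (by push_cast; linarith)).2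
    exact (mul_nonpos_of_nonneg_of_nonpos hφ hD0).trans (mul_nonneg hc0 (add_nonneg hs hg))
  calc (1 - (1 - c / K) ^ (n + 1)) * D
      ≤ ((1 - 1 / K) * φ + c / K) * D :=
        mul_le_mul_of_nonneg_right (one_sub_pow_succ_le hc0 hc1 hn) (by linarith)
    _ = φ * D + (c - φ) * (D / K) := by ring
    _ ≤ φ * (D' + g) + (c - φ) * g := by gcongr <;> linarith
    _ = φ * D' + c * g := by ring
    _ ≤ c * (s + g) := by linarith

lemma one_sub_pow_succ_mul_le_add (hc0 : 0 ≤ c) (hc1 : c ≤ 1) {K D D' g s : ℝ}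
    {n : ℕ} (hn : (n : ℝ) + 1 ≤ K) (hD : D ≤ K * g) (hD' : D - c * g ≤ D')
    (ih : (1 - (1 - c / K) ^ n) * D' ≤ c * s) :
    (1 - (1 - c / K) ^ (n + 1)) * D ≤ c * (s + g) := by
  obtain ⟨hlo, hhi⟩ := one_sub_div_pow_mem_Icc hc0 hc1 (L := K) (n := n) (by linarith)
  have hgD : D / K ≤ g := (div_le_iff₀' (by linarith [n.cast_nonneg (α := ℝ)])).mpr hD
  have hpow : 0 ≤ c * (1 - c / K) ^ n := mul_nonneg hc0 (by linarith)
  calc (1 - (1 - c / K) ^ (n + 1)) * D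
      = (1 - (1 - c / K) ^ n) * D + c * (1 - c / K) ^ n * (D / K) := by ring
    _ ≤ (1 - (1 - c / K) ^ n) * (D' + c * g) + c * (1 - c / K) ^ n * g := by
        gcongr; linarith
    _ = (1 - (1 - c / K) ^ n) * D' + c * g := by ring
    _ ≤ c * (s + g) := by linarith

theorem one_sub_pow_mul_le_mul_sum (hc0 : 0 ≤ c) (hc1 : c ≤ 1) (n : ℕ) (g D K : ℕ → ℝ)
    (hK : (n : ℝ) ≤ K 0) (hg : ∀ t < n, 0 ≤ g t) (hD : ∀ t < n, D t ≤ K t * g t)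
    (hstep : ∀ t < n, (D t - g t ≤ D (t + 1) ∧ K (t + 1) = K t - 1) ∨
      (D t - c * g t ≤ D (t + 1) ∧ K (t + 1) = K t)) :
    (1 - (1 - c / K 0) ^ n) * D 0 ≤ c * ∑ t ∈ range n, g t := by
  induction n generalizing g D K with
  | zero => simp
  | succ n ih =>
    push_cast at hK
    have hK1 : (n : ℝ) ≤ K 1 := by rcases hstep 0 n.succ_pos with h | h <;> linarith [h.2]
    have ih := ih (fun t => g (t + 1)) (fun t => D (t + 1)) (fun t => K (t + 1)) hK1
      (fun t _ => hg _ (by omega)) (fun t _ => hD _ (by omega)) (fun t _ => hstep _ (by omega))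
    have hs : 0 ≤ ∑ t ∈ range n, g (t + 1) :=
      sum_nonneg fun t ht => hg _ (by simp only [mem_range] at ht; omega)
    rw [sum_range_succ']
    rcases hstep 0 n.succ_pos with ⟨hD1, hKeq⟩ | ⟨hD1, hKeq⟩
    · rw [hKeq] at ih
      exact one_sub_pow_succ_mul_le_add_of_sub_one hc0 hc1 hK (hg 0 n.succ_pos) hs
        (hD 0 n.succ_pos) hD1 ih
    · rw [hKeq] at ih
      exact one_sub_pow_succ_mul_le_add hc0 hc1 hK (hD 0 n.succ_pos) hD1 ih
end

section SetFunction

variable {ι : Type*} [DecidableEq ι] {f : Finset ι → ℝ}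

lemma le_add_sum_of_gain_le {A : Finset ι} {M : ι → ℝ}
    (h : ∀ B, A ⊆ B → ∀ o ∉ B, f (insert o B) - f B ≤ M o) (T : Finset ι) :
    f (A ∪ T) ≤ f A + ∑ o ∈ T \ A, M o := by
  induction T using Finset.induction_on with
  | empty => simp
  | @insert o T hoT ih =>
    by_cases hoA : o ∈ A
    · rwa [union_insert, insert_eq_of_mem (mem_union_left T hoA), insert_sdiff_of_mem T hoA]
    · have hoAT : o ∉ A ∪ T := by simp [hoA, hoT]
      rw [union_insert, insert_sdiff_of_notMem T hoA,
        sum_insert fun ho => hoT (mem_sdiff.mp ho).1]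
      linarith [h (A ∪ T) subset_union_left o hoAT]

lemma add_sum_le_of_le_gain {A : Finset ι} {m : ι → ℝ}
    (h : ∀ B, A ⊆ B → ∀ o ∉ B, m o ≤ f (insert o B) - f B) (T : Finset ι) :
    f A + ∑ o ∈ T \ A, m o ≤ f (A ∪ T) := by
  have := le_add_sum_of_gain_le (f := -f) (M := -m)
    (fun B hB o ho => by simp only [Pi.neg_apply]; linarith [h B hB o ho]) T
  simp only [Pi.neg_apply, sum_neg_distrib] at this
  linarith

lemma one_sub_curvature_mul_gain_le [Fintype ι]
    (hsub : ∀ A B : Finset ι, A ⊆ B → ∀ x ∉ B,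
      f (insert x B) - f B ≤ f (insert x A) - f A)
    (hpos : ∀ x : ι, 0 < f (insert x ∅) - f ∅) {c : ℝ}
    (hc : c = 1 - ⨅ x : ι,
      (f (insert x (Finset.univ.erase x)) - f (Finset.univ.erase x)) /
        (f (insert x ∅) - f ∅))
    {x : ι} {A : Finset ι} (hx : x ∉ A) :
    (1 - c) * (f (insert x ∅) - f ∅) ≤ f (insert x A) - f A := by
  have hratio : 1 - c ≤ (f (insert x (univ.erase x)) - f (univ.erase x)) /
      (f (insert x ∅) - f ∅) := by
    rw [hc, sub_sub_cancel]
    exact ciInf_le (Finite.bddBelow_range _) x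
  have hA : A ⊆ univ.erase x := fun y hy => mem_erase.mpr ⟨fun h => hx (h ▸ hy), mem_univ y⟩
  linarith [(le_div_iff₀ (hpos x)).mp hratio, hsub A _ hA x (notMem_erase x _)]

noncomputable def curvatureDeficit (f : Finset ι → ℝ) (c : ℝ) (O T : Finset ι) : ℝ :=
  f O - f T + (1 - c) * ∑ s ∈ T \ O, (f (insert s ∅) - f ∅)

lemma curvatureDeficit_le_mul_gain {c k : ℝ} {O T : Finset ι} {x : ι}
    (hmono : ∀ A B : Finset ι, A ⊆ B → f A ≤ f B)
    (hsub : ∀ A B : Finset ι, A ⊆ B → ∀ x ∉ B,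
      f (insert x B) - f B ≤ f (insert x A) - f A)
    (hcurv : ∀ x A, x ∉ A → (1 - c) * (f (insert x ∅) - f ∅) ≤ f (insert x A) - f A)
    (hO : (O.card : ℝ) ≤ k)
    (hmax : ∀ y ∉ T, f (insert y T) - f T ≤ f (insert x T) - f T) :
    curvatureDeficit f c O T ≤ (k - (O ∩ T).card) * (f (insert x T) - f T) := by
  have hgain : 0 ≤ f (insert x T) - f T := sub_nonneg.mpr (hmono _ _ (subset_insert x T))
  have hlower := add_sum_le_of_le_gain (A := O) (fun B _ o ho => hcurv o B ho) T
  have hupper := le_add_sum_of_gain_le (A := T) (M := fun _ => f (insert x T) - f T)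
    (fun B hB o ho => (hsub T B hB o ho).trans (hmax o fun h => ho (hB h))) O
  have hcard : ((O \ T).card : ℝ) ≤ k - (O ∩ T).card := by
    have := card_sdiff_add_card_inter O T
    have : ((O \ T).card : ℝ) + (O ∩ T).card = O.card := by exact_mod_cast this
    linarith
  rw [sum_const, nsmul_eq_mul, union_comm] at hupper
  rw [← mul_sum] at hlower
  unfold curvatureDeficit
  linarith [mul_le_mul_of_nonneg_right hcard hgain]

lemma curvatureDeficit_insert {c k : ℝ} {O T : Finset ι} {x : ι}
    (hsub : ∀ A B : Finset ι, A ⊆ B → ∀ x ∉ B,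
      f (insert x B) - f B ≤ f (insert x A) - f A)
    (hc1 : c ≤ 1) (hx : x ∉ T) :
    (curvatureDeficit f c O T - (f (insert x T) - f T) ≤ curvatureDeficit f c O (insert x T) ∧
      k - (O ∩ insert x T).card = k - (O ∩ T).card - 1) ∨
    (curvatureDeficit f c O T - c * (f (insert x T) - f T) ≤
        curvatureDeficit f c O (insert x T) ∧
      k - (O ∩ insert x T).card = k - (O ∩ T).card) := by
  unfold curvatureDeficit
  by_cases hxO : x ∈ O
  · left
    rw [insert_sdiff_of_mem T hxO, inter_insert_of_mem hxO,
      card_insert_of_notMem fun h => hx (mem_inter.mp h).2]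
    push_cast
    constructor <;> linarith
  · right
    rw [insert_sdiff_of_notMem T hxO, sum_insert fun h => hx (mem_sdiff.mp h).1,
      inter_insert_of_notMem hxO]
    have := mul_le_mul_of_nonneg_left (hsub ∅ T (empty_subset T) x hx) (sub_nonneg.mpr hc1)
    constructor <;> linarith

end SetFunction

lemma tendsto_one_sub_exp_neg_div :
    Tendsto (fun t : ℝ => (1 - Real.exp (-t)) / t) (𝓝[>] 0) (𝓝 1) := by
  have h : HasDerivAt (fun t : ℝ => 1 - Real.exp (-t)) 1 0 := by
    simpa using ((Real.hasDerivAt_exp (-0)).comp 0 (hasDerivAt_neg 0)).const_sub 1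
  simpa [div_eq_inv_mul] using h.tendsto_slope_zero_right

theorem greedy_curvature_guarantee_general
    {ι : Type*} [Fintype ι] [DecidableEq ι]
    (f : Finset ι → ℝ)
    (hnorm : f ∅ = 0)
    (hmono : ∀ A B : Finset ι, A ⊆ B → f A ≤ f B)
    (hsub : ∀ A B : Finset ι, A ⊆ B → ∀ x ∉ B,
      f (insert x B) - f B ≤ f (insert x A) - f A)
    (hpos : ∀ x : ι, 0 < f (insert x ∅) - f ∅)
    (c : ℝ)
    (hc : c = 1 - ⨅ x : ι,
      (f (insert x (Finset.univ.erase x)) - f (Finset.univ.erase x)) /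
        (f (insert x ∅) - f ∅))
    (hc0 : 0 < c) (hc1 : c ≤ 1)
    (k : ℕ) (hk : 1 ≤ k)
    (S : ℕ → Finset ι) (hS0 : S 0 = ∅)
    (hgreedy : ∀ t < k, ∃ x ∉ S t, S (t + 1) = insert x (S t) ∧
      ∀ y ∉ S t, f (insert y (S t)) - f (S t) ≤ f (insert x (S t)) - f (S t))
    (Sstar : Finset ι) (hcard : Sstar.card ≤ k) :
    f (S k) ≥ ((1 - Real.exp (-c)) / c) * f Sstar ∧
    Filter.Tendsto (fun t : ℝ => (1 - Real.exp (-t)) / t)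
      (nhdsWithin 0 (Set.Ioi 0)) (nhds 1) ∧
    (1 - Real.exp (-(1 : ℝ))) / 1 = 1 - 1 / Real.exp 1 := by
  refine ⟨?_, tendsto_one_sub_exp_neg_div, by rw [Real.exp_neg, div_one, one_div]⟩
  have hcurv : ∀ x A, x ∉ A → (1 - c) * (f (insert x ∅) - f ∅) ≤ f (insert x A) - f A :=
    fun x A hx => one_sub_curvature_mul_gain_le hsub hpos hc hx
  have hbound := one_sub_pow_mul_le_mul_sum hc0.le hc1 k (fun t => f (S (t + 1)) - f (S t))
    (fun t => curvatureDeficit f c Sstar (S t)) (fun t => k - (Sstar ∩ S t).card)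
    (by simp [hS0])
    (fun t ht => by
      obtain ⟨x, -, hS1, -⟩ := hgreedy t ht
      exact sub_nonneg.mpr (hmono _ _ (hS1 ▸ subset_insert x (S t))))
    (fun t ht => by
      obtain ⟨x, -, hS1, hmax⟩ := hgreedy t ht
      rw [hS1]
      exact curvatureDeficit_le_mul_gain hmono hsub hcurv (by exact_mod_cast hcard) hmax)
    (fun t ht => by
      obtain ⟨x, hx, hS1, -⟩ := hgreedy t ht
      rw [hS1]
      exact curvatureDeficit_insert hsub hc1 hx)
  simp only [sum_range_sub (fun t => f (S t)), hS0, curvatureDeficit, hnorm, empty_sdiff,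
    sum_empty, inter_empty, card_empty, Nat.cast_zero, sub_zero, mul_zero, add_zero] at hbound
  have hexp : 1 - Real.exp (-c) ≤ 1 - (1 - c / k) ^ k :=
    sub_le_sub_left (Real.one_sub_div_pow_le_exp_neg (hc1.trans (by exact_mod_cast hk))) 1
  have hOpos : 0 ≤ f Sstar := hnorm ▸ hmono ∅ Sstar (empty_subset _)
  rw [ge_iff_le, div_mul_eq_mul_div, div_le_iff₀ hc0, mul_comm _ c]
  exact (mul_le_mul_of_nonneg_right hexp hOpos).trans hbound

/-- Curvature-dependent greedy guarantee: for a normalized,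
monotone, submodular `f` with positive singleton gains and total curvature
`c = 1 − min_x Δ_x(D∖{x})/Δ_x(∅)` satisfying `0 < c ≤ 1`, greedy with budget `k`
achieves `f(S_greedy) ≥ ((1 − e^{−c})/c) · f(S*)`.  As `c → 0⁺` the factor
approaches `1`, and at `c = 1` it equals `1 − 1/e`. -/
theorem greedy_curvature_guarantee
    {ι : Type*} [Fintype ι] [DecidableEq ι] [Nonempty ι]
    (f : Finset ι → ℝ)
    (hnorm : f ∅ = 0)
    (hmono : ∀ A B : Finset ι, A ⊆ B → f A ≤ f B)
    (hsub : ∀ A B : Finset ι, A ⊆ B → ∀ x ∉ B,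
      f (insert x B) - f B ≤ f (insert x A) - f A)
    (hpos : ∀ x : ι, 0 < f (insert x ∅) - f ∅)
    (c : ℝ)
    (hc : c = 1 - ⨅ x : ι,
      (f (insert x (Finset.univ.erase x)) - f (Finset.univ.erase x)) /
        (f (insert x ∅) - f ∅))
    (hc0 : 0 < c) (hc1 : c ≤ 1)
    (k : ℕ) (hk : 1 ≤ k)
    (S : ℕ → Finset ι) (hS0 : S 0 = ∅)
    (hgreedy : ∀ t < k, ∃ x ∉ S t, S (t + 1) = insert x (S t) ∧
      ∀ y ∉ S t, f (insert y (S t)) - f (S t) ≤ f (insert x (S t)) - f (S t))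
    (Sstar : Finset ι) (hcard : Sstar.card ≤ k)
    (hopt : ∀ T : Finset ι, T.card ≤ k → f T ≤ f Sstar) :
    f (S k) ≥ ((1 - Real.exp (-c)) / c) * f Sstar ∧
    Filter.Tendsto (fun t : ℝ => (1 - Real.exp (-t)) / t)
      (nhdsWithin 0 (Set.Ioi 0)) (nhds 1) ∧
    (1 - Real.exp (-(1 : ℝ))) / 1 = 1 - 1 / Real.exp 1 :=
  greedy_curvature_guarantee_general f hnorm hmono hsub hpos c hc hc0 hc1 k hk S hS0 hgreedy Sstar
    hcard
end

section
/- Let D be a finite set, d ≥ 1, g_i ∈ ℝ^d for i ∈ D, α > 0, and define F_S, Δ_x(S), base_x, ε_x(S) as for the Fisher utility. Suppose there exist G_max > 0 and ρ ∈ (0,1) with ‖g_x‖ ≤ G_max for all x, with α‖F_S‖ ≤ ρ for every S ⊆ D of size at most k, and with 1 − ρ − α G_max² ρ > 0; set C = 1/(1 − ρ − α G_max² ρ). Then for any nested chain S_0 = ∅ ⊂ S_1 ⊂ ⋯ ⊂ S_k with S_t = S_{t−1} ∪ {x_t}, the cumulative perturbation satisfies ∑_{t=1}^{k} |ε_{x_t}(S_{t−1})|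 ≤ C · k · α² · max_{S ⊆ D, |S| ≤ k} max_{x ∈ D} ∑_{y∈S} (g_xᵀ g_y)². -/
open Matrix Finset

/-- Fisher matrix `F_S = ∑_{y∈S} g_y g_yᵀ`. -/
noncomputable def fisherMatrix {ι : Type*} [DecidableEq ι] {d : ℕ}
    (g : ι → (Fin d → ℝ)) (S : Finset ι) : Matrix (Fin d) (Fin d) ℝ :=
  ∑ y ∈ S, vecMulVec (g y) (g y)

/-- Fisher utility `F(S) = log det (I + α F_S)`. -/
noncomputable def fisherUtility {ι : Type*} [DecidableEq ι] {d : ℕ}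
    (g : ι → (Fin d → ℝ)) (α : ℝ) (S : Finset ι) : ℝ :=
  Real.log ((1 + α • fisherMatrix g S).det)

/-- Marginal gain `Δ_x(S) = F(S ∪ {x}) − F(S)`. -/
noncomputable def fisherDelta {ι : Type*} [DecidableEq ι] {d : ℕ}
    (g : ι → (Fin d → ℝ)) (α : ℝ) (x : ι) (S : Finset ι) : ℝ :=
  fisherUtility g α (insert x S) - fisherUtility g α S

/-- Modular baseline `base_x = log (1 + α ‖gₓ‖²)`. -/
noncomputable def fisherBase {ι : Type*} {d : ℕ}
    (g : ι → (Fin d → ℝ)) (α : ℝ) (x : ι) : ℝ :=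
  Real.log (1 + α * (g x ⬝ᵥ g x))

/-- Perturbation `ε_x(S) = Δ_x(S) − base_x`. -/
noncomputable def fisherEps {ι : Type*} [DecidableEq ι] {d : ℕ}
    (g : ι → (Fin d → ℝ)) (α : ℝ) (x : ι) (S : Finset ι) : ℝ :=
  fisherDelta g α x S - fisherBase g α x

/-- Operator (spectral) norm of a matrix, as the norm of the induced map on
Euclidean space. -/
noncomputable def matOpNorm {d : ℕ} (A : Matrix (Fin d) (Fin d) ℝ) : ℝ :=
  ‖Matrix.toEuclideanCLM (𝕜 := ℝ) A‖

/-!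
By the matrix determinant lemma, with `M = 1 + α F_S`, the gain is
`Δ_x(S) = log (1 + α g_xᵀ M⁻¹ g_x)`, so `ε_x(S)` compares `log (1 + α g_xᵀ M⁻¹ g_x)` with
`log (1 + α ‖g_x‖²)`. Since `log (1 + ·)` is `1`-Lipschitz on `[0, ∞)` and `1 - α F ≤ M⁻¹ ≤ 1` in
the Loewner order, `|ε_x(S)| ≤ α² g_xᵀ F_S g_x = α² ∑_{y ∈ S} (g_xᵀ g_y)²`. Summing along the chain
bounds the cumulative perturbation by `k α²` times the supremum, and `C ≥ 1`.
-/

theorem Real.abs_log_one_add_sub_log_one_add_le {a b : ℝ} (ha : 0 ≤ a) (hb : 0 ≤ b) :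
    |Real.log (1 + a) - Real.log (1 + b)| ≤ |a - b| := by
  wlog hba : b ≤ a generalizing a b
  · rw [abs_sub_comm, abs_sub_comm a]
    exact this hb ha (le_of_not_ge hba)
  have hlog : Real.log (1 + b) ≤ Real.log (1 + a) := Real.log_le_log (by linarith) (by linarith)
  rw [abs_of_nonneg (sub_nonneg.2 hlog), abs_of_nonneg (sub_nonneg.2 hba),
    ← Real.log_div (by positivity) (by positivity)]
  calc Real.log ((1 + a) / (1 + b)) ≤ (1 + a) / (1 + b) - 1 :=
        Real.log_le_sub_one_of_pos (by positivity)
    _ = (a - b) / (1 + b) := by field_simp; ring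
    _ ≤ a - b := div_le_self (by linarith) (by linarith)

namespace Matrix

variable {n : Type*} [Fintype n]

theorem det_add_vecMulVec [DecidableEq n] {R : Type*} [CommRing R] {A : Matrix n n R}
    (hA : IsUnit A.det) (u v : n → R) :
    (A + vecMulVec u v).det = A.det * (1 + v ⬝ᵥ A⁻¹ *ᵥ u) := by
  rw [vecMulVec_eq Unit, det_add_replicateCol_mul_replicateRow hA,
    det_unique (1 + _ : Matrix Unit Unit R), Matrix.mul_assoc, ← replicateCol_mulVec,
    add_apply, one_apply_eq, replicateRow_mul_replicateCol_apply]

theorem IsHermitian.dotProduct_mulVec_comm {F : Matrix n n ℝ} (hF : F.IsHermitian)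
    (x y : n → ℝ) : x ⬝ᵥ F *ᵥ y = F *ᵥ x ⬝ᵥ y := by
  rw [dotProduct_mulVec, ← mulVec_transpose, ← conjTranspose_eq_transpose_of_trivial, hF.eq]

theorem PosSemidef.abs_dotProduct_sub_inv_one_add_smul_mulVec_le [DecidableEq n]
    {F : Matrix n n ℝ} (hF : F.PosSemidef) {α : ℝ} (hα : 0 ≤ α) (v : n → ℝ) :
    |v ⬝ᵥ v - v ⬝ᵥ (1 + α • F)⁻¹ *ᵥ v| ≤ α * (v ⬝ᵥ F *ᵥ v) := by
  have hM : IsUnit (1 + α • F).det :=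
    (PosDef.one.add_posSemidef (hF.smul hα)).isUnit.map detMonoidHom
  obtain ⟨w, rfl⟩ : ∃ w, v = (1 + α • F) *ᵥ w :=
    ⟨(1 + α • F)⁻¹ *ᵥ v, by rw [mulVec_mulVec, mul_nonsing_inv _ hM, one_mulVec]⟩
  have hb : 0 ≤ w ⬝ᵥ F *ᵥ w := by simpa using hF.dotProduct_mulVec_nonneg w
  have hc : 0 ≤ F *ᵥ w ⬝ᵥ F *ᵥ w := by simpa using dotProduct_star_self_nonneg (F *ᵥ w)
  have he : 0 ≤ F *ᵥ w ⬝ᵥ F *ᵥ F *ᵥ w := by simpa using hF.dotProduct_mulVec_nonneg (F *ᵥ w)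
  -- With `v = w + α u`, `u = F w`, the two sides are `α (wᵀu + α uᵀu)` and
  -- `α (wᵀu + 2α uᵀu + α² uᵀFu)`.
  rw [mulVec_mulVec, nonsing_inv_mul _ hM, one_mulVec, add_mulVec, one_mulVec, smul_mulVec]
  simp only [mulVec_add, mulVec_smul, dotProduct_add, add_dotProduct, dotProduct_smul,
    smul_dotProduct, smul_eq_mul, hF.isHermitian.dotProduct_mulVec_comm w (F *ᵥ w),
    dotProduct_comm (F *ᵥ w) w]
  rw [abs_le]
  constructor <;> nlinarith [mul_nonneg hα hb, mul_nonneg (mul_nonneg hα hα) hc,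
    mul_nonneg (mul_nonneg hα hα) (mul_nonneg hα he)]

theorem PosSemidef.abs_log_det_add_vecMulVec_sub_le [DecidableEq n] {F : Matrix n n ℝ}
    (hF : F.PosSemidef) {α : ℝ} (hα : 0 ≤ α) (v : n → ℝ) :
    |Real.log (1 + α • (F + vecMulVec v v)).det - Real.log (1 + α • F).det
      - Real.log (1 + α * (v ⬝ᵥ v))| ≤ α ^ 2 * (v ⬝ᵥ F *ᵥ v) := by
  have hM : (1 + α • F).PosDef := PosDef.one.add_posSemidef (hF.smul hα)
  have hq : 0 ≤ v ⬝ᵥ (1 + α • F)⁻¹ *ᵥ v := by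
    simpa using hM.inv.posSemidef.dotProduct_mulVec_nonneg v
  have hdet : (1 + α • (F + vecMulVec v v)).det
      = (1 + α • F).det * (1 + α * (v ⬝ᵥ (1 + α • F)⁻¹ *ᵥ v)) := by
    rw [smul_add, ← add_assoc, ← smul_vecMulVec,
      det_add_vecMulVec (hM.isUnit.map detMonoidHom), mulVec_smul, dotProduct_smul, smul_eq_mul]
  rw [hdet, Real.log_mul hM.det_pos.ne' (by positivity), add_sub_cancel_left]
  calc _ ≤ |α * (v ⬝ᵥ (1 + α • F)⁻¹ *ᵥ v) - α * (v ⬝ᵥ v)| :=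
        Real.abs_log_one_add_sub_log_one_add_le (by positivity)
          (mul_nonneg hα (dotProduct_star_self_nonneg v))
    _ = α * |v ⬝ᵥ v - v ⬝ᵥ (1 + α • F)⁻¹ *ᵥ v| := by
        rw [← mul_sub, abs_mul, abs_of_nonneg hα, abs_sub_comm]
    _ ≤ α * (α * (v ⬝ᵥ F *ᵥ v)) :=
        mul_le_mul_of_nonneg_left (hF.abs_dotProduct_sub_inv_one_add_smul_mulVec_le hα v) hα
    _ = α ^ 2 * (v ⬝ᵥ F *ᵥ v) := by ring

end Matrix

section Fisher

variable {ι : Type*} [DecidableEq ι] {d : ℕ} (g : ι → (Fin d → ℝ))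

theorem posSemidef_fisherMatrix (S : Finset ι) : (fisherMatrix g S).PosSemidef :=
  posSemidef_sum S fun y _ => by simpa using posSemidef_vecMulVec_self_star (g y)

theorem fisherMatrix_insert {x : ι} {S : Finset ι} (hx : x ∉ S) :
    fisherMatrix g (insert x S) = fisherMatrix g S + vecMulVec (g x) (g x) := by
  rw [fisherMatrix, sum_insert hx, add_comm, fisherMatrix]

theorem dotProduct_fisherMatrix_mulVec (S : Finset ι) (v : Fin d → ℝ) :
    v ⬝ᵥ fisherMatrix g S *ᵥ v = ∑ y ∈ S, (v ⬝ᵥ g y) ^ 2 := by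
  simp [fisherMatrix, sum_mulVec, dotProduct_sum, vecMulVec_mulVec, dotProduct_comm (g _) v, sq]

theorem abs_fisherEps_le {α : ℝ} (hα : 0 ≤ α) {x : ι} {S : Finset ι} (hx : x ∉ S) :
    |fisherEps g α x S| ≤ α ^ 2 * ∑ y ∈ S, (g x ⬝ᵥ g y) ^ 2 := by
  rw [← dotProduct_fisherMatrix_mulVec]
  simpa [fisherEps, fisherDelta, fisherUtility, fisherBase, fisherMatrix_insert g hx]
    using (posSemidef_fisherMatrix g S).abs_log_det_add_vecMulVec_sub_le hα (g x)

end Fisher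

theorem card_eq_of_insert_chain {ι : Type*} [DecidableEq ι] {S : ℕ → Finset ι} {x : ℕ → ι}
    {k : ℕ} (hS0 : S 0 = ∅)
    (hchain : ∀ t < k, x (t + 1) ∉ S t ∧ S (t + 1) = insert (x (t + 1)) (S t)) :
    ∀ t ≤ k, (S t).card = t := by
  intro t ht
  induction t with
  | zero => simp [hS0]
  | succ t ih =>
    obtain ⟨hx, hS⟩ := hchain t ht
    rw [hS, card_insert_of_notMem hx, ih (by omega)]

theorem fisher_cumulative_eps_bound_general
    {ι : Type*} [Fintype ι] [DecidableEq ι] {d : ℕ}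
    (g : ι → (Fin d → ℝ)) (α : ℝ) (hα : 0 < α)
    (Gmax ρ : ℝ) (hρ0 : 0 < ρ)
    (k : ℕ)
    (hden : 0 < 1 - ρ - α * Gmax ^ 2 * ρ)
    (S : ℕ → Finset ι) (x : ℕ → ι)
    (hS0 : S 0 = ∅)
    (hchain : ∀ t < k, x (t + 1) ∉ S t ∧ S (t + 1) = insert (x (t + 1)) (S t)) :
    ∑ t ∈ Finset.range k, |fisherEps g α (x (t + 1)) (S t)| ≤
      (1 / (1 - ρ - α * Gmax ^ 2 * ρ)) * k * α ^ 2 *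
        (⨆ S' : {S' : Finset ι // S'.card ≤ k}, ⨆ z : ι,
          ∑ y ∈ S'.1, (g z ⬝ᵥ g y) ^ 2) := by
  set V := ⨆ S' : {S' : Finset ι // S'.card ≤ k}, ⨆ z : ι, ∑ y ∈ S'.1, (g z ⬝ᵥ g y) ^ 2
  have hV0 : 0 ≤ V := Real.iSup_nonneg fun _ => Real.iSup_nonneg fun _ => by positivity
  have hstep : ∀ t ∈ range k, |fisherEps g α (x (t + 1)) (S t)| ≤ α ^ 2 * V := by
    intro t ht
    have htk := mem_range.1 ht
    have hcard : (S t).card ≤ k := (card_eq_of_insert_chain hS0 hchain t htk.le).trans_le htk.le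
    refine (abs_fisherEps_le g hα.le (hchain t htk).1).trans
      (mul_le_mul_of_nonneg_left ?_ (sq_nonneg α))
    exact le_ciSup_of_le (Finite.bddAbove_range _) ⟨S t, hcard⟩
      (le_ciSup (Finite.bddAbove_range fun z => ∑ y ∈ S t, (g z ⬝ᵥ g y) ^ 2) (x (t + 1)))
  have hC : 1 ≤ 1 / (1 - ρ - α * Gmax ^ 2 * ρ) := by
    rw [le_div_iff₀ hden]
    nlinarith [mul_nonneg (mul_nonneg hα.le (sq_nonneg Gmax)) hρ0.le]
  calc ∑ t ∈ range k, |fisherEps g α (x (t + 1)) (S t)| ≤ ∑ _t ∈ range k, α ^ 2 * V :=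
        sum_le_sum hstep
    _ = 1 * k * α ^ 2 * V := by rw [sum_const, card_range, nsmul_eq_mul]; ring
    _ ≤ (1 / (1 - ρ - α * Gmax ^ 2 * ρ)) * k * α ^ 2 * V := by gcongr

/-- Cumulative perturbation bound along a greedy chain:
`∑_{t=1}^k |ε_{x_t}(S_{t−1})| ≤ C · k · α² · max_{|S| ≤ k} max_x ∑_{y∈S} (gₓᵀ g_y)²`. -/
theorem fisher_cumulative_eps_bound
    {ι : Type*} [Fintype ι] [DecidableEq ι] [Nonempty ι] {d : ℕ} (hd : 1 ≤ d)
    (g : ι → (Fin d → ℝ)) (α : ℝ) (hα : 0 < α)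
    (Gmax ρ : ℝ) (hG : 0 < Gmax) (hρ0 : 0 < ρ) (hρ1 : ρ < 1)
    (hGbound : ∀ x : ι, Real.sqrt (g x ⬝ᵥ g x) ≤ Gmax)
    (k : ℕ)
    (hFS : ∀ S : Finset ι, S.card ≤ k → α * matOpNorm (fisherMatrix g S) ≤ ρ)
    (hden : 0 < 1 - ρ - α * Gmax ^ 2 * ρ)
    (S : ℕ → Finset ι) (x : ℕ → ι)
    (hS0 : S 0 = ∅)
    (hchain : ∀ t < k, x (t + 1) ∉ S t ∧ S (t + 1) = insert (x (t + 1)) (S t)) :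
    ∑ t ∈ Finset.range k, |fisherEps g α (x (t + 1)) (S t)| ≤
      (1 / (1 - ρ - α * Gmax ^ 2 * ρ)) * k * α ^ 2 *
        (⨆ S' : {S' : Finset ι // S'.card ≤ k}, ⨆ z : ι,
          ∑ y ∈ S'.1, (g z ⬝ᵥ g y) ^ 2) :=
  fisher_cumulative_eps_bound_general g α hα Gmax ρ hρ0 k hden S x hS0 hchain
end

section
/- Let d ≥ 1, g_x ∈ ℝ^d, α > 0, let F_S be a d×d real symmetric positive semidefinite matrix with α‖F_S‖ ≤ ρ < 1, set A = αF_S, Σ = g_xᵀ F_S g_x, D_x = 1 + α‖g_x‖², and u = (−α²Σ + α ∑_{m=2}^{∞} (−1)^m g_xᵀ A^m g_x)/D_x. Then |u| ≤ α²Σ/((1−ρ) D_x); and if moreover ‖g_x‖ ≤ G_max, then |u| ≤ α G_max² ρ/(1−ρ). -/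
open Matrix

/-!
Write `S` for the positive square root of a positive semidefinite `A`. Then
`xᵀ A^(k+1) x = (S x)ᵀ A^k (S x)`, which is at most `‖A‖^k · |S x|² = ‖A‖^k · xᵀ A x`.
With `A = α F_S` and `‖A‖ ≤ ρ`, the tail `∑_{m ≥ 2}` of the Neumann series is therefore
dominated by a geometric series with sum `ρ/(1-ρ) · α Σ`, and together with the leading
term `α² Σ` this gives `α² Σ / (1-ρ)`. The second bound follows from `Dₓ ≥ 1` and
`α Σ ≤ α ‖F_S‖ ‖gₓ‖² ≤ ρ G_max²`.
-/

open scoped Matrix.Norms.L2Operator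

lemma matOpNorm_eq_norm {d : ℕ} (A : Matrix (Fin d) (Fin d) ℝ) : matOpNorm A = ‖A‖ := rfl

namespace Matrix

variable {n : Type*} [Fintype n]

lemma dotProduct_self_eq_norm_toLp_sq (x : n → ℝ) : x ⬝ᵥ x = ‖WithLp.toLp 2 x‖ ^ 2 := by
  rw [← real_inner_self_eq_norm_sq, EuclideanSpace.inner_toLp_toLp, star_trivial]

lemma abs_dotProduct_mulVec_le [DecidableEq n] (M : Matrix n n ℝ) (x : n → ℝ) :
    |x ⬝ᵥ (M *ᵥ x)| ≤ ‖M‖ * (x ⬝ᵥ x) := by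
  rw [dotProduct_self_eq_norm_toLp_sq, ← inner_toEuclideanCLM, cstar_norm_def]
  set v := WithLp.toLp 2 x
  calc |inner ℝ v (toEuclideanCLM (𝕜 := ℝ) M v)| ≤ ‖v‖ * ‖toEuclideanCLM (𝕜 := ℝ) M v‖ :=
        abs_real_inner_le_norm _ _
    _ ≤ ‖v‖ * (‖toEuclideanCLM (𝕜 := ℝ) M‖ * ‖v‖) := by
        gcongr; exact ContinuousLinearMap.le_opNorm _ _
    _ = _ := by ring

lemma dotProduct_mul_mulVec_of_transpose_eq {S : Matrix n n ℝ} (hS : Sᵀ = S) (B : Matrix n n ℝ)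
    (x : n → ℝ) : x ⬝ᵥ ((S * B * S) *ᵥ x) = (S *ᵥ x) ⬝ᵥ (B *ᵥ (S *ᵥ x)) := by
  have hxS : x ᵥ* S = S *ᵥ x := by rw [← vecMul_transpose, hS]
  rw [← mulVec_mulVec, ← mulVec_mulVec, dotProduct_mulVec, hxS]

open scoped MatrixOrder in
lemma PosSemidef.abs_dotProduct_pow_succ_mulVec_le [DecidableEq n] {A : Matrix n n ℝ}
    (hA : A.PosSemidef) (x : n → ℝ) (k : ℕ) :
    |x ⬝ᵥ (A ^ (k + 1) *ᵥ x)| ≤ ‖A ^ k‖ * (x ⬝ᵥ (A *ᵥ x)) := by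
  obtain ⟨S, hS_nonneg, hSS⟩ : ∃ S : Matrix n n ℝ, 0 ≤ S ∧ S * S = A :=
    ⟨CFC.sqrt A, CFC.sqrt_nonneg A, CFC.sqrt_mul_sqrt_self A hA.nonneg⟩
  have hST : Sᵀ = S := hS_nonneg.posSemidef.isHermitian
  have hpow : A ^ (k + 1) = S * A ^ k * S := by
    have hcomm : Commute S ((S * S) ^ k) :=
      ((Commute.refl S).mul_right (Commute.refl S)).pow_right k
    rw [pow_succ, ← hSS, ← mul_assoc, hcomm.eq]
  have hA_quad : x ⬝ᵥ (A *ᵥ x) = (S *ᵥ x) ⬝ᵥ (S *ᵥ x) := by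
    simpa [← hSS] using dotProduct_mul_mulVec_of_transpose_eq hST 1 x
  rw [hpow, dotProduct_mul_mulVec_of_transpose_eq hST, hA_quad]
  exact abs_dotProduct_mulVec_le _ _

lemma PosSemidef.abs_tsum_neumann_tail_le [DecidableEq n] {A : Matrix n n ℝ} (hA : A.PosSemidef)
    (x : n → ℝ) {ρ : ℝ} (hAρ : ‖A‖ ≤ ρ) (hρ1 : ρ < 1) :
    |∑' k : ℕ, (-1 : ℝ) ^ (k + 2) * (x ⬝ᵥ (A ^ (k + 2) *ᵥ x))| ≤
      ρ * (x ⬝ᵥ (A *ᵥ x)) / (1 - ρ) := by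
  have hρ0 : 0 ≤ ρ := (norm_nonneg A).trans hAρ
  have hquad : 0 ≤ x ⬝ᵥ (A *ᵥ x) := hA.dotProduct_mulVec_nonneg x
  rw [← Real.norm_eq_abs, div_eq_mul_inv]
  refine tsum_of_norm_bounded ((hasSum_geometric_of_lt_one hρ0 hρ1).mul_left _) fun k => ?_
  calc ‖(-1 : ℝ) ^ (k + 2) * (x ⬝ᵥ (A ^ (k + 2) *ᵥ x))‖ = |x ⬝ᵥ (A ^ (k + 1 + 1) *ᵥ x)| := by
        simp
    _ ≤ ‖A ^ (k + 1)‖ * (x ⬝ᵥ (A *ᵥ x)) := hA.abs_dotProduct_pow_succ_mulVec_le x (k + 1)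
    _ ≤ ρ ^ (k + 1) * (x ⬝ᵥ (A *ᵥ x)) := by
        gcongr
        exact (norm_pow_le' A k.succ_pos).trans (pow_le_pow_left₀ (norm_nonneg A) hAρ _)
    _ = ρ * (x ⬝ᵥ (A *ᵥ x)) * ρ ^ k := by ring

end Matrix

lemma abs_neg_sq_mul_add_mul_div_le {α q T ρ D : ℝ} (hα : 0 < α) (hq : 0 ≤ q) (hρ1 : ρ < 1)
    (hD : 1 ≤ D) (hT : |T| ≤ ρ * (α * q) / (1 - ρ)) :
    |(-α ^ 2 * q + α * T) / D| ≤ α ^ 2 * q / ((1 - ρ) * D) := by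
  have h1ρ : 0 < 1 - ρ := sub_pos.mpr hρ1
  have hnum : |-α ^ 2 * q + α * T| ≤ α ^ 2 * q / (1 - ρ) :=
    calc |-α ^ 2 * q + α * T| ≤ α ^ 2 * q + α * |T| := by
          refine (abs_add_le _ _).trans_eq ?_
          rw [abs_mul, abs_mul, abs_neg, abs_of_pos hα, abs_of_nonneg hq, abs_pow, abs_of_pos hα]
      _ ≤ α ^ 2 * q + α * (ρ * (α * q) / (1 - ρ)) := by gcongr
      _ = α ^ 2 * q / (1 - ρ) := by field_simp; ring
  rw [abs_div, abs_of_pos (zero_lt_one.trans_le hD), ← div_div]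
  exact div_le_div_of_nonneg_right hnum (zero_le_one.trans hD)

theorem neumann_u_bound_general
    {d : ℕ} (gx : Fin d → ℝ) (α : ℝ) (hα : 0 < α)
    (FS : Matrix (Fin d) (Fin d) ℝ) (hFS : FS.PosSemidef)
    (ρ : ℝ) (hρ1 : ρ < 1) (hAρ : α * matOpNorm FS ≤ ρ) :
    |(-α ^ 2 * (gx ⬝ᵥ (FS *ᵥ gx)) +
        α * ∑' n : ℕ, ((-1 : ℝ) ^ (n + 2)) * (gx ⬝ᵥ (((α • FS) ^ (n + 2)) *ᵥ gx))) /
        (1 + α * (gx ⬝ᵥ gx))| ≤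
      α ^ 2 * (gx ⬝ᵥ (FS *ᵥ gx)) / ((1 - ρ) * (1 + α * (gx ⬝ᵥ gx))) ∧
    ∀ Gmax : ℝ, Real.sqrt (gx ⬝ᵥ gx) ≤ Gmax →
      |(-α ^ 2 * (gx ⬝ᵥ (FS *ᵥ gx)) +
          α * ∑' n : ℕ, ((-1 : ℝ) ^ (n + 2)) * (gx ⬝ᵥ (((α • FS) ^ (n + 2)) *ᵥ gx))) /
          (1 + α * (gx ⬝ᵥ gx))| ≤
        α * Gmax ^ 2 * ρ / (1 - ρ) := by
  rw [matOpNorm_eq_norm] at hAρ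
  have hAρ' : ‖α • FS‖ ≤ ρ := by rwa [norm_smul, Real.norm_of_nonneg hα.le]
  have hρ0 : 0 ≤ ρ := (norm_nonneg _).trans hAρ'
  have htail := (hFS.smul hα.le).abs_tsum_neumann_tail_le gx hAρ' hρ1
  rw [smul_mulVec, dotProduct_smul, smul_eq_mul] at htail
  have hq : 0 ≤ gx ⬝ᵥ (FS *ᵥ gx) := hFS.dotProduct_mulVec_nonneg gx
  have hgg : 0 ≤ gx ⬝ᵥ gx := by rw [dotProduct_self_eq_norm_toLp_sq]; positivity
  have hD : 1 ≤ 1 + α * (gx ⬝ᵥ gx) := le_add_of_nonneg_right (mul_nonneg hα.le hgg)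
  have hbound := abs_neg_sq_mul_add_mul_div_le hα hq hρ1 hD htail
  refine ⟨hbound, fun Gmax hG => hbound.trans ?_⟩
  have hqG : α * (gx ⬝ᵥ (FS *ᵥ gx)) ≤ ρ * Gmax ^ 2 :=
    calc α * (gx ⬝ᵥ (FS *ᵥ gx)) ≤ α * ‖FS‖ * (gx ⬝ᵥ gx) := by
          rw [mul_assoc]; gcongr; exact (le_abs_self _).trans (abs_dotProduct_mulVec_le FS gx)
      _ ≤ ρ * Gmax ^ 2 := by gcongr; exact (Real.sqrt_le_iff.mp hG).2
  calc α ^ 2 * (gx ⬝ᵥ (FS *ᵥ gx)) / ((1 - ρ) * (1 + α * (gx ⬝ᵥ gx)))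
      ≤ α * (α * (gx ⬝ᵥ (FS *ᵥ gx))) / (1 - ρ) := by
        rw [← mul_assoc, ← sq]
        gcongr
        exact le_mul_of_one_le_right (by linarith) hD
    _ ≤ α * (ρ * Gmax ^ 2) / (1 - ρ) := by gcongr
    _ = α * Gmax ^ 2 * ρ / (1 - ρ) := by ring

/-- With `A = α F_S`, `Σ = gₓᵀ F_S gₓ`, `Dₓ = 1 + α ‖gₓ‖²`, and
`u = (−α²Σ + α ∑_{m=2}^∞ (−1)^m gₓᵀ Aᵐ gₓ)/Dₓ`, one has
`|u| ≤ α²Σ/((1−ρ) Dₓ)`; and if moreover `‖gₓ‖ ≤ G_max`, then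
`|u| ≤ α G_max² ρ/(1−ρ)`. -/
theorem neumann_u_bound
    {d : ℕ} (hd : 1 ≤ d) (gx : Fin d → ℝ) (α : ℝ) (hα : 0 < α)
    (FS : Matrix (Fin d) (Fin d) ℝ) (hFS : FS.PosSemidef)
    (ρ : ℝ) (hρ1 : ρ < 1) (hAρ : α * matOpNorm FS ≤ ρ) :
    |(-α ^ 2 * (gx ⬝ᵥ (FS *ᵥ gx)) +
        α * ∑' n : ℕ, ((-1 : ℝ) ^ (n + 2)) * (gx ⬝ᵥ (((α • FS) ^ (n + 2)) *ᵥ gx))) /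
        (1 + α * (gx ⬝ᵥ gx))| ≤
      α ^ 2 * (gx ⬝ᵥ (FS *ᵥ gx)) / ((1 - ρ) * (1 + α * (gx ⬝ᵥ gx))) ∧
    ∀ Gmax : ℝ, Real.sqrt (gx ⬝ᵥ gx) ≤ Gmax →
      |(-α ^ 2 * (gx ⬝ᵥ (FS *ᵥ gx)) +
          α * ∑' n : ℕ, ((-1 : ℝ) ^ (n + 2)) * (gx ⬝ᵥ (((α • FS) ^ (n + 2)) *ᵥ gx))) /
          (1 + α * (gx ⬝ᵥ gx))| ≤
        α * Gmax ^ 2 * ρ / (1 - ρ) :=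
  neumann_u_bound_general gx α hα FS hFS ρ hρ1 hAρ
end

section
/- Let f : 2^X → ℝ be a normalized, monotone, submodular set function on a finite ground set X of size n with Δ_x(∅) > 0 for all x ∈ X, total curvature c = 1 − min_{x∈X} Δ_x(X∖{x})/Δ_x(∅), and let G : [0,1]^n → ℝ be its multilinear extension G(y) = ∑_{R⊆X} f(R) ∏_{i∈R} y_i ∏_{i∉R} (1 − y_i). Let S* ⊆ X with |S*| ≤ k maximize f over subsets of size at most k. Then for every y ∈ [0,1]^n, ∑_{i∈S*} ∂G/∂y_i (y) ≥ f(S*) − c · G(y); consequently max_{v ∈ P_k} v · ∇G(y) ≥ f(S*) − c · G(y), where P_k = {v ∈ [0,1]^n : ∑_i v_i ≤ k}. -/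
open Finset

/-- Multilinear extension `G(y) = ∑_{R⊆X} f(R) ∏_{i∈R} yᵢ ∏_{i∉R} (1 − yᵢ)`. -/
noncomputable def multilinearExt {ι : Type*} [Fintype ι] [DecidableEq ι]
    (f : Finset ι → ℝ) (y : ι → ℝ) : ℝ :=
  ∑ R ∈ Finset.univ.powerset,
    f R * (∏ i ∈ R, y i) * (∏ i ∈ Rᶜ, (1 - y i))

/-- Partial derivative of the multilinear extension:
`∂G/∂yᵢ(y) = ∑_{R ⊆ X∖{i}} (f(R∪{i}) − f(R)) ∏_{j∈R} yⱼ ∏_{j∉R∪{i}} (1 − yⱼ)`. -/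
noncomputable def multilinearExtPartial {ι : Type*} [Fintype ι] [DecidableEq ι]
    (f : Finset ι → ℝ) (i : ι) (y : ι → ℝ) : ℝ :=
  ∑ R ∈ (Finset.univ.erase i).powerset,
    (f (insert i R) - f R) * (∏ j ∈ R, y j) * (∏ j ∈ (insert i R)ᶜ, (1 - y j))

section prob
variable {ι : Type*} [Fintype ι] [DecidableEq ι]

lemma psum (y : ι → ℝ) :
    ∑ S ∈ Finset.univ.powerset, (∏ j ∈ S, y j) * ∏ j ∈ Sᶜ, (1 - y j) = 1 := by
  classical
  calc ∑ S ∈ Finset.univ.powerset, (∏ j ∈ S, y j) * ∏ j ∈ Sᶜ, (1 - y j)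
      = ∑ S ∈ Finset.univ.powerset,
          (∏ j ∈ S, y j) * ∏ j ∈ Finset.univ \ S, (1 - y j) := by
        refine Finset.sum_congr rfl fun S _ => ?_
        rw [Finset.compl_eq_univ_sdiff]
    _ = ∏ j ∈ Finset.univ, (y j + (1 - y j)) := (Finset.prod_add _ _ _).symm
    _ = 1 := by simp

lemma partial_eq (f : Finset ι → ℝ) (i : ι) (y : ι → ℝ) :
    multilinearExtPartial f i y
      = ∑ S ∈ Finset.univ.powerset,
          (f (insert i S) - f (S.erase i)) * ((∏ j ∈ S, y j) * ∏ j ∈ Sᶜ, (1 - y j)) := by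
  classical
  have hiu : i ∉ Finset.univ.erase i := Finset.notMem_erase i _
  have huniv : (Finset.univ : Finset ι) = insert i (Finset.univ.erase i) :=
    (Finset.insert_erase (mem_univ i)).symm
  conv_rhs => rw [huniv, Finset.sum_powerset_insert hiu]
  rw [← Finset.sum_add_distrib, multilinearExtPartial]
  refine Finset.sum_congr rfl fun R hR => ?_
  have hiR : i ∉ R := fun h => hiu (Finset.mem_powerset.mp hR h)
  have hicomp : i ∈ Rᶜ := Finset.mem_compl.mpr hiR
  have e : Rᶜ = insert i ((insert i R)ᶜ) := by
    rw [Finset.compl_insert, Finset.insert_erase hicomp]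
  have hnotmem : i ∉ (insert i R)ᶜ := by
    rw [Finset.compl_insert]; exact Finset.notMem_erase i _
  rw [Finset.erase_eq_of_notMem hiR, Finset.insert_idem, Finset.erase_insert hiR,
    Finset.prod_insert hiR, e, Finset.prod_insert hnotmem]
  ring

lemma G_eq (f : Finset ι → ℝ) (y : ι → ℝ) :
    multilinearExt f y
      = ∑ S ∈ Finset.univ.powerset, f S * ((∏ j ∈ S, y j) * ∏ j ∈ Sᶜ, (1 - y j)) := by
  rw [multilinearExt]
  exact Finset.sum_congr rfl fun S _ => by ring

end prob


section aux
set_option linter.unusedSectionVars false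
variable {ι : Type*} [Fintype ι] [DecidableEq ι] [Nonempty ι] (f : Finset ι → ℝ)

lemma tele1 (hmono : ∀ A B : Finset ι, A ⊆ B → f A ≤ f B)
    (hsub : ∀ A B : Finset ι, A ⊆ B → ∀ x ∉ B,
      f (insert x B) - f B ≤ f (insert x A) - f A)
    (A B : Finset ι) :
    f (A ∪ B) - f B ≤ ∑ a ∈ A, (f (insert a B) - f B) := by
  classical
  induction A using Finset.induction_on with
  | empty => simp
  | @insert a A' ha ih =>
      rw [Finset.sum_insert ha, insert_union]
      by_cases haB : a ∈ A' ∪ B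
      · rw [Finset.insert_eq_self.mpr haB]
        have h0 := hmono B (insert a B) (subset_insert a B)
        linarith
      · have h1 := hsub B (A' ∪ B) subset_union_right a haB
        linarith

lemma marg (hmono : ∀ A B : Finset ι, A ⊆ B → f A ≤ f B)
    (hsub : ∀ A B : Finset ι, A ⊆ B → ∀ x ∉ B,
      f (insert x B) - f B ≤ f (insert x A) - f A)
    (hpos : ∀ x : ι, 0 < f (insert x ∅) - f ∅)
    (c : ℝ)
    (hc : c = 1 - ⨅ x : ι,
      (f (insert x (Finset.univ.erase x)) - f (Finset.univ.erase x)) /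
        (f (insert x ∅) - f ∅))
    (x : ι) (S : Finset ι) (hx : x ∉ S) :
    (1 - c) * (f (insert x ∅) - f ∅) ≤ f (insert x S) - f S := by
  have hsubset : S ⊆ Finset.univ.erase x := fun a ha =>
    Finset.mem_erase.mpr ⟨fun h => hx (h ▸ ha), mem_univ a⟩
  have hxe : x ∉ Finset.univ.erase x := Finset.notMem_erase x _
  have h1 := hsub S (Finset.univ.erase x) hsubset x hxe
  set g : ι → ℝ := fun z =>
    (f (insert z (Finset.univ.erase z)) - f (Finset.univ.erase z)) /
      (f (insert z ∅) - f ∅) with hg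
  have h2 : (1 - c) ≤ g x := by
    have he : (1 : ℝ) - c = iInf g := by rw [hc]; ring
    rw [he]
    exact ciInf_le (Finite.bddBelow_range g) x
  have hpx := hpos x
  have h3 : (1 - c) * (f (insert x ∅) - f ∅) ≤ g x * (f (insert x ∅) - f ∅) :=
    mul_le_mul_of_nonneg_right h2 (le_of_lt hpx)
  have h4 : g x * (f (insert x ∅) - f ∅)
      = f (insert x (Finset.univ.erase x)) - f (Finset.univ.erase x) :=
    div_mul_cancel₀ _ (ne_of_gt hpx)
  linarith

lemma one_sub_c_nonneg (hmono : ∀ A B : Finset ι, A ⊆ B → f A ≤ f B)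
    (hpos : ∀ x : ι, 0 < f (insert x ∅) - f ∅)
    (c : ℝ)
    (hc : c = 1 - ⨅ x : ι,
      (f (insert x (Finset.univ.erase x)) - f (Finset.univ.erase x)) /
        (f (insert x ∅) - f ∅)) :
    0 ≤ 1 - c := by
  have he : (1 : ℝ) - c = ⨅ x : ι,
      (f (insert x (Finset.univ.erase x)) - f (Finset.univ.erase x)) /
        (f (insert x ∅) - f ∅) := by rw [hc]; ring
  rw [he]
  refine le_ciInf fun z => div_nonneg ?_ (le_of_lt (hpos z))
  have := hmono (Finset.univ.erase z) (insert z (Finset.univ.erase z))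
    (subset_insert _ _)
  linarith

lemma tele3 (hmono : ∀ A B : Finset ι, A ⊆ B → f A ≤ f B)
    (hsub : ∀ A B : Finset ι, A ⊆ B → ∀ x ∉ B,
      f (insert x B) - f B ≤ f (insert x A) - f A)
    (hpos : ∀ x : ι, 0 < f (insert x ∅) - f ∅)
    (c : ℝ)
    (hc : c = 1 - ⨅ x : ι,
      (f (insert x (Finset.univ.erase x)) - f (Finset.univ.erase x)) /
        (f (insert x ∅) - f ∅))
    (D : Finset ι) : ∀ B E : Finset ι, Disjoint D B → E ⊆ B →
    (1 - c) * (f (E ∪ D) - f E) ≤ f (B ∪ D) - f B := by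
  classical
  have h1c := one_sub_c_nonneg f hmono hpos c hc
  induction D using Finset.induction_on with
  | empty => intro B E _ _; simp
  | @insert a D' ha ih =>
      intro B E hdisj hEB
      have haB : a ∉ B := by
        have := Finset.disjoint_left.mp hdisj (Finset.mem_insert_self a D')
        exact this
      have hdisj' : Disjoint D' B :=
        Finset.disjoint_of_subset_left (Finset.subset_insert a D') hdisj
      have haBD : a ∉ B ∪ D' := by
        simp only [Finset.mem_union]
        push_neg
        exact ⟨haB, ha⟩
      have haED : a ∉ E ∪ D' := by
        simp only [Finset.mem_union]
        push_neg
        exact ⟨fun h => haB (hEB h), ha⟩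
      have h1 : (1 - c) * (f (insert a ∅) - f ∅) ≤ f (insert a (B ∪ D')) - f (B ∪ D') :=
        marg f hmono hsub hpos c hc a (B ∪ D') haBD
      have h2 : f (insert a (E ∪ D')) - f (E ∪ D') ≤ f (insert a ∅) - f ∅ := by
        have := hsub ∅ (E ∪ D') (Finset.empty_subset _) a haED
        linarith
      have h2' : (1 - c) * (f (insert a (E ∪ D')) - f (E ∪ D'))
          ≤ (1 - c) * (f (insert a ∅) - f ∅) := mul_le_mul_of_nonneg_left h2 h1c
      have h3 := ih B E hdisj' hEB
      have e1 : B ∪ insert a D' = insert a (B ∪ D') := by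
        rw [Finset.union_insert]
      have e2 : E ∪ insert a D' = insert a (E ∪ D') := by
        rw [Finset.union_insert]
      rw [e1, e2]
      nlinarith [mul_le_mul_of_nonneg_left h3 h1c]

end aux

section aux2
set_option linter.unusedSectionVars false
variable {ι : Type*} [Fintype ι] [DecidableEq ι] [Nonempty ι] (f : Finset ι → ℝ)

lemma keyIneq (hnorm : f ∅ = 0)
    (hmono : ∀ A B : Finset ι, A ⊆ B → f A ≤ f B)
    (hsub : ∀ A B : Finset ι, A ⊆ B → ∀ x ∉ B,
      f (insert x B) - f B ≤ f (insert x A) - f A)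
    (hpos : ∀ x : ι, 0 < f (insert x ∅) - f ∅)
    (c : ℝ)
    (hc : c = 1 - ⨅ x : ι,
      (f (insert x (Finset.univ.erase x)) - f (Finset.univ.erase x)) /
        (f (insert x ∅) - f ∅))
    (A B : Finset ι) :
    f B - c * f A ≤ ∑ i ∈ B, (f (insert i A) - f (A.erase i)) := by
  classical
  have h1c := one_sub_c_nonneg f hmono hpos c hc
  have hsplit := Finset.sum_inter_add_sum_sdiff B A
    (fun i => f (insert i A) - f (A.erase i))
  -- diff part
  have hdiff : f (B ∪ A) - f A ≤ ∑ i ∈ B \ A, (f (insert i A) - f (A.erase i)) := by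
    have e : ∀ i ∈ B \ A, f (insert i A) - f (A.erase i) = f (insert i A) - f A := by
      intro i hi
      rw [Finset.erase_eq_of_notMem (Finset.mem_sdiff.mp hi).2]
    rw [Finset.sum_congr rfl e]
    have := tele1 f hmono hsub (B \ A) A
    have eU : B \ A ∪ A = B ∪ A := Finset.sdiff_union_self_eq_union
    rw [eU] at this
    exact this
  -- inter part
  have hinter : (1 - c) * (f (B ∩ A) - f ∅)
      ≤ ∑ i ∈ B ∩ A, (f (insert i A) - f (A.erase i)) := by
    have step1 : ∑ i ∈ B ∩ A, (1 - c) * (f (insert i ∅) - f ∅)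
        ≤ ∑ i ∈ B ∩ A, (f (insert i A) - f (A.erase i)) := by
      refine Finset.sum_le_sum fun i hi => ?_
      have hiA : i ∈ A := (Finset.mem_inter.mp hi).2
      have e1 : insert i A = A := Finset.insert_eq_self.mpr hiA
      have e2 : f A = f (insert i (A.erase i)) := by rw [Finset.insert_erase hiA]
      rw [e1, e2]
      exact marg f hmono hsub hpos c hc i (A.erase i) (Finset.notMem_erase i A)
    have step2 : f (B ∩ A) - f ∅ ≤ ∑ i ∈ B ∩ A, (f (insert i ∅) - f ∅) := by
      have := tele1 f hmono hsub (B ∩ A) ∅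
      rwa [Finset.union_empty] at this
    calc (1 - c) * (f (B ∩ A) - f ∅)
        ≤ (1 - c) * ∑ i ∈ B ∩ A, (f (insert i ∅) - f ∅) :=
          mul_le_mul_of_nonneg_left step2 h1c
      _ = ∑ i ∈ B ∩ A, (1 - c) * (f (insert i ∅) - f ∅) := by rw [Finset.mul_sum]
      _ ≤ _ := step1
  -- curvature telescoping
  have htel : (1 - c) * (f A - f (A ∩ B)) ≤ f (B ∪ A) - f B := by
    have h := tele3 f hmono hsub hpos c hc (A \ B) B (A ∩ B)
      Finset.sdiff_disjoint Finset.inter_subset_right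
    have e1 : A ∩ B ∪ A \ B = A := by ext a; simp; tauto
    have e2 : B ∪ A \ B = B ∪ A := Finset.union_sdiff_self_eq_union
    rw [e1, e2] at h
    exact h
  have ecomm : f (A ∩ B) = f (B ∩ A) := by rw [Finset.inter_comm]
  rw [hnorm] at hinter
  rw [ecomm] at htel
  ring_nf at hinter htel ⊢
  linarith
end aux2

/-- Key gradient inequality for the continuous greedy analysis:
for a normalized, monotone submodular `f` with total curvature `c` and `S*`
optimal among sets of size at most `k`, for every `y ∈ [0,1]^n`,
`∑_{i∈S*} ∂G/∂yᵢ(y) ≥ f(S*) − c·G(y)`; consequently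
`max_{v ∈ P_k} v·∇G(y) ≥ f(S*) − c·G(y)`. -/
theorem multilinear_gradient_lower_bound
    {ι : Type*} [Fintype ι] [DecidableEq ι] [Nonempty ι]
    (f : Finset ι → ℝ)
    (hnorm : f ∅ = 0)
    (hmono : ∀ A B : Finset ι, A ⊆ B → f A ≤ f B)
    (hsub : ∀ A B : Finset ι, A ⊆ B → ∀ x ∉ B,
      f (insert x B) - f B ≤ f (insert x A) - f A)
    (hpos : ∀ x : ι, 0 < f (insert x ∅) - f ∅)
    (c : ℝ)
    (hc : c = 1 - ⨅ x : ι,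
      (f (insert x (Finset.univ.erase x)) - f (Finset.univ.erase x)) /
        (f (insert x ∅) - f ∅))
    (k : ℕ) (Sstar : Finset ι) (hcard : Sstar.card ≤ k)
    (hopt : ∀ T : Finset ι, T.card ≤ k → f T ≤ f Sstar)
    (y : ι → ℝ) (hy : ∀ i, 0 ≤ y i ∧ y i ≤ 1) :
    f Sstar - c * multilinearExt f y ≤
      ∑ i ∈ Sstar, multilinearExtPartial f i y ∧
    ∃ v : ι → ℝ, (∀ i, 0 ≤ v i ∧ v i ≤ 1) ∧ (∑ i, v i) ≤ (k : ℝ) ∧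
      f Sstar - c * multilinearExt f y ≤ ∑ i, v i * multilinearExtPartial f i y := by
  classical
  set p : Finset ι → ℝ := fun S => (∏ j ∈ S, y j) * ∏ j ∈ Sᶜ, (1 - y j) with hp
  have hp0 : ∀ S : Finset ι, 0 ≤ p S := fun S =>
    mul_nonneg (Finset.prod_nonneg fun j _ => (hy j).1)
      (Finset.prod_nonneg fun j _ => by have := (hy j).2; linarith)
  have hp1 : ∑ S ∈ Finset.univ.powerset, p S = 1 := psum y
  have e1 : ∑ i ∈ Sstar, multilinearExtPartial f i y
      = ∑ S ∈ Finset.univ.powerset,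
          (∑ i ∈ Sstar, (f (insert i S) - f (S.erase i))) * p S := by
    calc ∑ i ∈ Sstar, multilinearExtPartial f i y
        = ∑ i ∈ Sstar, ∑ S ∈ Finset.univ.powerset,
            (f (insert i S) - f (S.erase i)) * p S := by
          refine Finset.sum_congr rfl fun i _ => partial_eq f i y
      _ = ∑ S ∈ Finset.univ.powerset, ∑ i ∈ Sstar,
            (f (insert i S) - f (S.erase i)) * p S := Finset.sum_comm
      _ = _ := Finset.sum_congr rfl fun S _ => (Finset.sum_mul _ _ _).symm
  have e2 : multilinearExt f y = ∑ S ∈ Finset.univ.powerset, f S * p S := G_eq f y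
  have hstep : ∑ S ∈ Finset.univ.powerset, (f Sstar - c * f S) * p S
      ≤ ∑ S ∈ Finset.univ.powerset,
          (∑ i ∈ Sstar, (f (insert i S) - f (S.erase i))) * p S :=
    Finset.sum_le_sum fun S _ =>
      mul_le_mul_of_nonneg_right (keyIneq f hnorm hmono hsub hpos c hc S Sstar) (hp0 S)
  have lhs_eq : ∑ S ∈ Finset.univ.powerset, (f Sstar - c * f S) * p S
      = f Sstar * (∑ S ∈ Finset.univ.powerset, p S)
        - c * ∑ S ∈ Finset.univ.powerset, f S * p S := by
    rw [Finset.mul_sum, Finset.mul_sum, ← Finset.sum_sub_distrib]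
    exact Finset.sum_congr rfl fun S _ => by ring
  have hmain : f Sstar - c * multilinearExt f y ≤ ∑ i ∈ Sstar, multilinearExtPartial f i y := by
    rw [e1, e2]
    rw [lhs_eq, hp1] at hstep
    linarith
  refine ⟨hmain, fun i => if i ∈ Sstar then (1 : ℝ) else 0, ?_, ?_, ?_⟩
  · intro i; by_cases h : i ∈ Sstar <;> simp [h]
  · have : ∑ i : ι, (if i ∈ Sstar then (1 : ℝ) else 0) = Sstar.card := by
      rw [Finset.sum_ite_mem, Finset.univ_inter, Finset.sum_const, nsmul_eq_mul, mul_one]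
    rw [this]
    exact_mod_cast hcard
  · have : ∑ i : ι, (if i ∈ Sstar then (1 : ℝ) else 0) * multilinearExtPartial f i y
        = ∑ i ∈ Sstar, multilinearExtPartial f i y := by
      simp only [ite_mul, one_mul, zero_mul]
      rw [Finset.sum_ite_mem, Finset.univ_inter]
    rw [this]
    exact hmain
end
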